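/- arXiv:2603.27865 — 2 statements merged into one kernel-verified Lean document; each statement's English description precedes it below -/
import Mathlib

section
/- Let f : H₀ → ℝⁿ be defined on the half-space H₀ = {x ∈ ℝⁿ : xₙ < 0} by f(x) = (-x'/xₙ, 1 - |x|), where x = (x', xₙ) and |x| is the Euclidean norm. Then f is a bijection of H₀ onto the half-space H₁ = {y ∈ ℝⁿ : yₙ < 1}, with inverse g(y) = (1 - yₙ)(1 + |y'|²)^{-1/2} (y', -1). -/
/-- The chart map f(x) = (-x'/xₙ, 1 - |x|) on the half-space {xₙ < 0},
with ℝⁿ modeled as ℝ^{n-1} × ℝ, x = (x', xₙ), |x| = √(|x'|² + xₙ²). -/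
noncomputable def fMap {n : ℕ} (x : EuclideanSpace ℝ (Fin n) × ℝ) :
    EuclideanSpace ℝ (Fin n) × ℝ :=
  ((-(x.2)⁻¹) • x.1, 1 - Real.sqrt (‖x.1‖ ^ 2 + x.2 ^ 2))

/-- The map g(y) = (1 - yₙ)(1 + |y'|²)^{-1/2} (y', -1). -/
noncomputable def gMap {n : ℕ} (y : EuclideanSpace ℝ (Fin n) × ℝ) :
    EuclideanSpace ℝ (Fin n) × ℝ :=
  (((1 - y.2) * (1 + ‖y.1‖ ^ 2) ^ (-(1 : ℝ) / 2)) • y.1,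
   ((1 - y.2) * (1 + ‖y.1‖ ^ 2) ^ (-(1 : ℝ) / 2)) * (-1))

lemma rpow_neg_half_sq {a : ℝ} (ha : 0 < a) : (a ^ 2 : ℝ) ^ (-(1 : ℝ) / 2) = a⁻¹ := by
  rw [← Real.rpow_natCast a 2, ← Real.rpow_mul ha.le]
  norm_num
  rw [Real.rpow_neg_one]

lemma gf_aux {n : ℕ} (x : EuclideanSpace ℝ (Fin n) × ℝ) (hx : x.2 < 0) :
    gMap (fMap x) = x := by
  obtain ⟨x1, x2⟩ := x
  simp only at hx
  have hx2 : x2 ≠ 0 := ne_of_lt hx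
  set r : ℝ := Real.sqrt (‖x1‖ ^ 2 + x2 ^ 2) with hrdef
  have hpos : 0 < ‖x1‖ ^ 2 + x2 ^ 2 := by positivity
  have hr0 : 0 < r := Real.sqrt_pos.mpr hpos
  have hr2 : r ^ 2 = ‖x1‖ ^ 2 + x2 ^ 2 := Real.sq_sqrt hpos.le
  have hnorm : ‖(-(x2)⁻¹) • x1‖ ^ 2 = (x2⁻¹) ^ 2 * ‖x1‖ ^ 2 := by
    rw [norm_smul]
    rw [Real.norm_eq_abs, mul_pow, sq_abs]
    ring_nf
  have hbase : 1 + ‖(-(x2)⁻¹) • x1‖ ^ 2 = (r / (-x2)) ^ 2 := by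
    rw [hnorm, div_pow, hr2]
    field_simp
    ring
  have ht : 0 < r / (-x2) := div_pos hr0 (by linarith)
  have key : (1 - (1 - r)) * ((1 + ‖(-(x2)⁻¹) • x1‖ ^ 2) ^ (-(1 : ℝ) / 2)) = -x2 := by
    rw [hbase, rpow_neg_half_sq ht]
    field_simp
    ring
  simp only [fMap, gMap]
  rw [key]
  refine Prod.ext ?_ ?_
  · simp only [smul_smul]
    rw [show (-x2) * (-(x2)⁻¹) = 1 by field_simp, one_smul]
  · simp only
    ring

lemma fg_aux {n : ℕ} (y : EuclideanSpace ℝ (Fin n) × ℝ) (hy : y.2 < 1) :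
    fMap (gMap y) = y := by
  obtain ⟨y1, y2⟩ := y
  simp only at hy
  have hb : (0:ℝ) < 1 + ‖y1‖ ^ 2 := by positivity
  set s : ℝ := (1 - y2) * (1 + ‖y1‖ ^ 2) ^ (-(1 : ℝ) / 2) with hsdef
  have hs0 : 0 < s := by
    apply mul_pos (by linarith) (Real.rpow_pos_of_pos hb _)
  have hnorm : ‖s • y1‖ ^ 2 = s ^ 2 * ‖y1‖ ^ 2 := by
    rw [norm_smul, Real.norm_eq_abs, mul_pow, sq_abs]
  have hsq : ‖s • y1‖ ^ 2 + (s * (-1)) ^ 2 = s ^ 2 * (1 + ‖y1‖ ^ 2) := by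
    rw [hnorm]; ring
  have hsqrt : Real.sqrt (‖s • y1‖ ^ 2 + (s * (-1)) ^ 2) = 1 - y2 := by
    rw [hsq, Real.sqrt_mul (by positivity), Real.sqrt_sq hs0.le, hsdef, mul_assoc]
    rw [Real.sqrt_eq_rpow, ← Real.rpow_add hb]
    norm_num
  simp only [fMap, gMap, ← hsdef]
  refine Prod.ext ?_ ?_
  · simp only [smul_smul]
    rw [show -(s * (-1))⁻¹ * s = 1 by field_simp, one_smul]
  · simp only [hsqrt]
    ring

/-- f is a bijection of H₀ = {xₙ < 0} onto H₁ = {yₙ < 1}, with inverse g. -/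
theorem stmt0 (n : ℕ) :
    Set.BijOn (fMap (n := n)) {x : EuclideanSpace ℝ (Fin n) × ℝ | x.2 < 0}
      {y : EuclideanSpace ℝ (Fin n) × ℝ | y.2 < 1} ∧
    (∀ x : EuclideanSpace ℝ (Fin n) × ℝ, x.2 < 0 → gMap (fMap x) = x) ∧
    (∀ y : EuclideanSpace ℝ (Fin n) × ℝ, y.2 < 1 → fMap (gMap y) = y) := by
  have hmf : Set.MapsTo (fMap (n := n)) {x : EuclideanSpace ℝ (Fin n) × ℝ | x.2 < 0}
      {y : EuclideanSpace ℝ (Fin n) × ℝ | y.2 < 1} := by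
    intro x hx
    simp only [Set.mem_setOf_eq] at hx ⊢
    have hpos : 0 < ‖x.1‖ ^ 2 + x.2 ^ 2 := by
      have : x.2 ≠ 0 := ne_of_lt hx
      positivity
    have := Real.sqrt_pos.mpr hpos
    simp only [fMap]
    linarith
  have hmg : Set.MapsTo (gMap (n := n)) {y : EuclideanSpace ℝ (Fin n) × ℝ | y.2 < 1}
      {x : EuclideanSpace ℝ (Fin n) × ℝ | x.2 < 0} := by
    intro y hy
    simp only [Set.mem_setOf_eq] at hy ⊢
    have hb : (0:ℝ) < 1 + ‖y.1‖ ^ 2 := by positivity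
    have hs : 0 < (1 - y.2) * (1 + ‖y.1‖ ^ 2) ^ (-(1 : ℝ) / 2) :=
      mul_pos (by linarith) (Real.rpow_pos_of_pos hb _)
    simp only [gMap]
    nlinarith
  refine ⟨?_, fun x hx => gf_aux x hx, fun y hy => fg_aux y hy⟩
  exact Set.InvOn.bijOn ⟨fun x hx => gf_aux x hx, fun y hy => fg_aux y hy⟩ hmf hmg
end

section
/- Let R ∈ SO(n) with block form [[A, b],[c, d]], d > 0. Then for every z' ∈ ℝ^{n-1}, |(Ad - bc) z'| ≥ d |z'|, and consequently the inverse matrix satisfies |(Ad - bc)^{-1} y'| ≤ d^{-1} |y'| for all y' ∈ ℝ^{n-1}. -/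
open Matrix

/-- For R ∈ SO(n) in block form [[A,b],[c,d]] with d > 0, the matrix
M = Ad - bc satisfies |M z'| ≥ d |z'| for all z', hence |M⁻¹ y'| ≤ d⁻¹ |y'|. -/
theorem stmt4 (n : ℕ) (R : Matrix (Fin (n + 1)) (Fin (n + 1)) ℝ)
    (hR : Rᵀ * R = 1) (hdet : R.det = 1)
    (d : ℝ) (hd : d = R (Fin.last n) (Fin.last n)) (hd0 : 0 < d)
    (M : Matrix (Fin n) (Fin n) ℝ)
    (hM : ∀ i j, M i j =
      d * R (Fin.castSucc i) (Fin.castSucc j) -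
        R (Fin.castSucc i) (Fin.last n) * R (Fin.last n) (Fin.castSucc j)) :
    (∀ z : Fin n → ℝ,
      d * Real.sqrt (∑ i, z i ^ 2) ≤ Real.sqrt (∑ i, (M.mulVec z) i ^ 2)) ∧
    (∀ y : Fin n → ℝ,
      Real.sqrt (∑ i, (M⁻¹.mulVec y) i ^ 2) ≤ d⁻¹ * Real.sqrt (∑ i, y i ^ 2)) := by
  have hRR : R * Rᵀ = 1 := mul_eq_one_comm.mp hR
  have col : ∀ j k : Fin (n+1), ∑ i, R i j * R i k = if j = k then 1 else 0 := by
    intro j k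
    have h := congrFun (congrFun hR j) k
    simpa [Matrix.mul_apply, Matrix.transpose_apply, Matrix.one_apply] using h
  -- b i = R i.castSucc last,  c j = R last j.castSucc
  have hbb : ∑ i : Fin n, R i.castSucc (Fin.last n) ^ 2 = 1 - d ^ 2 := by
    have h := col (Fin.last n) (Fin.last n)
    rw [Fin.sum_univ_castSucc] at h
    rw [if_pos rfl, ← hd] at h
    have h' : ∑ i : Fin n, R i.castSucc (Fin.last n) ^ 2 + d ^ 2 = 1 := by
      rw [← h]; congr 1
      · exact Finset.sum_congr rfl fun i _ => sq _
      · exact sq d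
    linarith
  have hcA : ∀ j : Fin n, ∑ i : Fin n,
      R i.castSucc (Fin.last n) * R i.castSucc j.castSucc
        = -(d * R (Fin.last n) j.castSucc) := by
    intro j
    have h := col (Fin.last n) j.castSucc
    rw [Fin.sum_univ_castSucc] at h
    have hne : (Fin.last n) ≠ j.castSucc := (Fin.castSucc_lt_last j).ne'
    rw [if_neg hne, ← hd] at h
    linarith [h]
  -- Key identity
  have key : ∀ z : Fin n → ℝ, ∑ i, (M.mulVec z) i ^ 2 =
      d ^ 2 * ∑ i, z i ^ 2 + (∑ j, R (Fin.last n) j.castSucc * z j) ^ 2 := by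
    intro z
    set w : Fin (n+1) → ℝ := fun i => ∑ j, R i j.castSucc * z j with hw_def
    have hw : ∑ i, w i ^ 2 = ∑ j, z j ^ 2 := by
      have step1 : ∀ i : Fin (n+1), w i ^ 2 =
          ∑ j, ∑ k, (z j * z k) * (R i j.castSucc * R i k.castSucc) := by
        intro i
        rw [hw_def]
        simp only [pow_two, Finset.sum_mul_sum]
        exact Finset.sum_congr rfl fun j _ => Finset.sum_congr rfl fun k _ => by ring
      calc ∑ i, w i ^ 2
          = ∑ i, ∑ j, ∑ k, (z j * z k) * (R i j.castSucc * R i k.castSucc) :=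
            Finset.sum_congr rfl fun i _ => step1 i
        _ = ∑ j, ∑ k, (z j * z k) * ∑ i, R i j.castSucc * R i k.castSucc := by
            rw [Finset.sum_comm]
            refine Finset.sum_congr rfl fun j _ => ?_
            rw [Finset.sum_comm]
            exact Finset.sum_congr rfl fun k _ => (Finset.mul_sum _ _ _).symm
        _ = ∑ j, ∑ k, (z j * z k) * (if j = k then 1 else 0) := by
            refine Finset.sum_congr rfl fun j _ => Finset.sum_congr rfl fun k _ => ?_
            rw [col]
            congr 1
            simp [Fin.castSucc_inj]
        _ = ∑ j, z j ^ 2 := by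
            refine Finset.sum_congr rfl fun j _ => ?_
            simp [mul_ite, Finset.sum_ite_eq, pow_two]
    have hMz : ∀ i, M.mulVec z i =
        d * w i.castSucc - R i.castSucc (Fin.last n) * w (Fin.last n) := by
      intro i
      simp only [Matrix.mulVec, dotProduct, hM, hw_def, Finset.mul_sum]
      rw [← Finset.sum_sub_distrib]
      exact Finset.sum_congr rfl fun j _ => by ring
    have hbw : ∑ i : Fin n, w i.castSucc * R i.castSucc (Fin.last n)
        = -(d * w (Fin.last n)) := by
      have : ∑ i : Fin n, w i.castSucc * R i.castSucc (Fin.last n)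
          = ∑ j, (∑ i : Fin n, R i.castSucc (Fin.last n) * R i.castSucc j.castSucc) * z j := by
        simp only [hw_def, Finset.sum_mul]
        rw [Finset.sum_comm]
        exact Finset.sum_congr rfl fun j _ => Finset.sum_congr rfl fun i _ => by ring
      rw [this]
      simp only [hcA]
      rw [hw_def, Finset.mul_sum, ← Finset.sum_neg_distrib]
      exact Finset.sum_congr rfl fun j _ => by ring
    have hwcs : ∑ i : Fin n, w i.castSucc ^ 2 = (∑ j, z j ^ 2) - w (Fin.last n) ^ 2 := by
      rw [← hw, Fin.sum_univ_castSucc]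
      ring
    calc ∑ i, (M.mulVec z) i ^ 2
        = ∑ i : Fin n, (d ^ 2 * w i.castSucc ^ 2
            - (2 * d * w (Fin.last n)) * (w i.castSucc * R i.castSucc (Fin.last n))
            + w (Fin.last n) ^ 2 * R i.castSucc (Fin.last n) ^ 2) := by
          refine Finset.sum_congr rfl fun i _ => ?_
          rw [hMz i]; ring
      _ = d ^ 2 * ∑ i : Fin n, w i.castSucc ^ 2
            - (2 * d * w (Fin.last n)) * ∑ i : Fin n, (w i.castSucc * R i.castSucc (Fin.last n))
            + w (Fin.last n) ^ 2 * ∑ i : Fin n, R i.castSucc (Fin.last n) ^ 2 := by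
          rw [Finset.sum_add_distrib, Finset.sum_sub_distrib, ← Finset.mul_sum,
            ← Finset.mul_sum, ← Finset.mul_sum]
      _ = d ^ 2 * ∑ i, z i ^ 2 + (∑ j, R (Fin.last n) j.castSucc * z j) ^ 2 := by
          rw [hwcs, hbw, hbb]
          have : w (Fin.last n) = ∑ j, R (Fin.last n) j.castSucc * z j := rfl
          rw [this]
          ring
  have part1 : ∀ z : Fin n → ℝ,
      d * Real.sqrt (∑ i, z i ^ 2) ≤ Real.sqrt (∑ i, (M.mulVec z) i ^ 2) := by
    intro z
    have h1 : d * Real.sqrt (∑ i, z i ^ 2) = Real.sqrt (d ^ 2 * ∑ i, z i ^ 2) := by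
      rw [Real.sqrt_mul (sq_nonneg d), Real.sqrt_sq hd0.le]
    rw [h1, key z]
    exact Real.sqrt_le_sqrt (le_add_of_nonneg_right (sq_nonneg _))
  refine ⟨part1, ?_⟩
  have hdetM : M.det ≠ 0 := by
    intro h0
    obtain ⟨v, hv, hMv⟩ := (Matrix.exists_mulVec_eq_zero_iff).mpr h0
    have hk := key v
    rw [hMv] at hk
    simp only [Pi.zero_apply, ne_eq, OfNat.ofNat_ne_zero, not_false_eq_true,
      zero_pow, Finset.sum_const_zero] at hk
    have h1 : (0:ℝ) ≤ ∑ i, v i ^ 2 := Finset.sum_nonneg fun i _ => sq_nonneg _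
    have h3 : d ^ 2 * ∑ i, v i ^ 2 ≤ 0 := by
      nlinarith [sq_nonneg (∑ j, R (Fin.last n) j.castSucc * v j)]
    have h4 : ∑ i, v i ^ 2 ≤ 0 := by nlinarith [mul_pos hd0 hd0]
    have h2 : ∑ i, v i ^ 2 = 0 := le_antisymm h4 h1
    apply hv
    funext i
    have := (Finset.sum_eq_zero_iff_of_nonneg (fun i _ => sq_nonneg (v i))).mp h2 i
      (Finset.mem_univ i)
    exact pow_eq_zero_iff (by norm_num) |>.mp this
  intro y
  have hMMinv : M * M⁻¹ = 1 := Matrix.mul_nonsing_inv M (isUnit_iff_ne_zero.mpr hdetM)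
  have hzy : M.mulVec (M⁻¹.mulVec y) = y := by
    rw [Matrix.mulVec_mulVec, hMMinv, Matrix.one_mulVec]
  have h := part1 (M⁻¹.mulVec y)
  rw [hzy] at h
  rw [le_inv_mul_iff₀ hd0]
  exact h
end
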